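/- arXiv:1912.06477 — 5 statements merged into one kernel-verified Lean document; each statement's English description precedes it below -/
import Mathlib

section
/- (Derivative of the pullback of a time-dependent k-form; Proposition A.2 of the paper, stated on a normed space.) Let V be a finite-dimensional real normed vector space and k ∈ ℕ. Let g : ℝ × V → V be twice continuously differentiable with each g(t,·) : V → V a diffeomorphism, and let X(t,y) := (∂ₛ g(s,x))|_{s=t} at x = g(t,·)⁻¹(y) be the Eulerian velocity field. Let ω : ℝ × V → (alternating continuous k-linear maps Vᵏ → ℝ) be continuously differentiable in (t,x). Define the pullback (gₜ*ωₜ)(x)(v₁,…,v_k) := ω(t, g(t,x))(D g(t,·)|_x v₁, …, D g(t,·)|_x v_k) and the Lie derivative (ℒ_{Xₜ}ωₜ)(x)(v₁,…,v_k) := (D_x ω(t,·)|_x (X(t,x)))(v₁,…,v_k) + Σ_{i=1}^{k} ω(t,x)(v₁,…,v_{i-1}, D_x X(t,·)|_x v_i, v_{i+1},…,v_k). Then for all t, x, v₁,…,v_k: ∂ₜ[(gₜ*ωₜ)(x)(v₁,…,v_k)] = [gₜ*(∂ₜωₜ + ℒ_{Xₜ}ωₜ)](x)(v₁,…,v_k).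 -/
/-!
Write `P = Dg` on `ℝ × V`, so that `D_x g = P (0, ·)` and `∂ₜ g = P (1, 0)`. The Leibniz rule for
a multilinear map evaluated at moving vectors differentiates `ω(τ, g(τ,x))(D_x g(τ,x) v)` into
`Dω (1, ∂ₜ g)` applied to `D_x g v`, plus one term per slot carrying `∂ₜ D_x g vᵢ`. Splitting
`Dω (1, ∂ₜ g)` gives `∂ₜ ω + D_y ω (X ∘ gₜ)`, and `X ∘ gₜ = ∂ₜ g` by definition of the Eulerian
velocity. Differentiating this identity in `x` gives `DX · D_x g = D_x ∂ₜ g`, which is `∂ₜ D_x g`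
by symmetry of the second derivative of the `C²` map `g`.
-/

open Function

section PartialDerivatives

variable {𝕜 : Type*} [NontriviallyNormedField 𝕜]
  {E F G : Type*} [NormedAddCommGroup E] [NormedSpace 𝕜 E] [NormedAddCommGroup F]
  [NormedSpace 𝕜 F] [NormedAddCommGroup G] [NormedSpace 𝕜 G]

theorem fderiv_comp_prodMk_right_apply {f : E × F → G} {a : E} {b : F}
    (hf : DifferentiableAt 𝕜 f (a, b)) (w : F) :
    fderiv 𝕜 (fun y => f (a, y)) b w = fderiv 𝕜 f (a, b) (0, w) := by
  have h : HasFDerivAt (fun y => f (a, y)) ((fderiv 𝕜 f (a, b)).comp (.inr 𝕜 E F)) b :=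
    hf.hasFDerivAt.comp b (hasFDerivAt_prodMk_right a b)
  rw [h.fderiv]
  rfl

theorem HasFDerivAt.hasDerivAt_comp_prodMk {f : 𝕜 × F → G} {f' : 𝕜 × F →L[𝕜] G}
    {c : 𝕜 → F} {c' : F} {s : 𝕜} (hf : HasFDerivAt f f' (s, c s)) (hc : HasDerivAt c c' s) :
    HasDerivAt (fun τ => f (τ, c τ)) (f' (1, c')) s :=
  hf.comp_hasDerivAt s ((hasDerivAt_id s).prodMk hc)

end PartialDerivatives

theorem HasDerivAt.continuousMultilinearMap_apply {𝕜 : Type*} [NontriviallyNormedField 𝕜]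
    {ι : Type*} [Fintype ι] [DecidableEq ι] {E : ι → Type*} [∀ i, NormedAddCommGroup (E i)]
    [∀ i, NormedSpace 𝕜 (E i)] {F : Type*} [NormedAddCommGroup F] [NormedSpace 𝕜 F]
    {A : 𝕜 → ContinuousMultilinearMap 𝕜 E F} {A' : ContinuousMultilinearMap 𝕜 E F}
    {B : ∀ i, 𝕜 → E i} {B' : ∀ i, E i} {t : 𝕜}
    (hA : HasDerivAt A A' t) (hB : ∀ i, HasDerivAt (B i) (B' i) t) :
    HasDerivAt (fun τ => A τ (fun i => B i τ))
      (A' (fun i => B i t) + ∑ i, A t (update (fun j => B j t) i (B' i))) t := by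
  simpa using (hA.hasFDerivAt.continuousMultilinearMap_apply fun i => (hB i).hasFDerivAt).hasDerivAt

section Pullback

variable {𝕜 : Type*} [NontriviallyNormedField 𝕜]
  {V W F : Type*} [NormedAddCommGroup V] [NormedSpace 𝕜 V] [NormedAddCommGroup W]
  [NormedSpace 𝕜 W] [NormedAddCommGroup F] [NormedSpace 𝕜 F]

theorem hasDerivAt_pullback {ι : Type*} [Fintype ι] [DecidableEq ι]
    {g : 𝕜 × V → W} {ω : 𝕜 × W → ContinuousMultilinearMap 𝕜 (fun _ : ι => W) F}
    {t : 𝕜} {x : V} (hg : Differentiable 𝕜 g) (hg' : DifferentiableAt 𝕜 (fderiv 𝕜 g) (t, x))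
    (hω : DifferentiableAt 𝕜 ω (t, g (t, x))) (v : ι → V) :
    HasDerivAt (fun τ => ω (τ, g (τ, x)) (fun i => fderiv 𝕜 (fun x' => g (τ, x')) x (v i)))
      (fderiv 𝕜 ω (t, g (t, x)) (1, fderiv 𝕜 g (t, x) (1, 0))
          (fun i => fderiv 𝕜 g (t, x) (0, v i))
        + ∑ i, ω (t, g (t, x)) (update (fun j => fderiv 𝕜 g (t, x) (0, v j)) i
            (fderiv 𝕜 (fderiv 𝕜 g) (t, x) (1, 0) (0, v i)))) t := by
  have hωt := hω.hasFDerivAt.hasDerivAt_comp_prodMk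
    ((hg (t, x)).hasFDerivAt.hasDerivAt_comp_prodMk (c := fun _ => x) (hasDerivAt_const t x))
  have hdg : ∀ i, HasDerivAt (fun τ => fderiv 𝕜 g (τ, x) (0, v i))
      (fderiv 𝕜 (fderiv 𝕜 g) (t, x) (1, 0) (0, v i)) t := fun i => by
    have h := (hg'.hasFDerivAt.hasDerivAt_comp_prodMk (c := fun _ => x)
      (hasDerivAt_const t x)).clm_apply (hasDerivAt_const t ((0 : 𝕜), v i))
    rwa [map_zero, add_zero] at h
  simp_rw [fderiv_comp_prodMk_right_apply (hg _)]
  exact hωt.continuousMultilinearMap_apply hdg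

end Pullback

section EulerianVelocity

variable {𝕜 : Type*} [RCLike 𝕜] {V : Type*} [NormedAddCommGroup V] [NormedSpace 𝕜 V]
  {g : 𝕜 × V → V} {ginv : V → V} {t : 𝕜}

noncomputable def eulerianVelocity (g : 𝕜 × V → V) (ginv : V → V) (t : 𝕜) (y : V) : V :=
  deriv (fun s => g (s, ginv y)) t

theorem eulerianVelocity_eq (hg : Differentiable 𝕜 g) (y : V) :
    eulerianVelocity g ginv t y = fderiv 𝕜 g (t, ginv y) (1, 0) :=
  ((hg _).hasFDerivAt.hasDerivAt_comp_prodMk (hasDerivAt_const t (ginv y))).deriv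

theorem eulerianVelocity_apply_comp (hg : Differentiable 𝕜 g)
    (hleft : ∀ x, ginv (g (t, x)) = x) (x : V) :
    eulerianVelocity g ginv t (g (t, x)) = fderiv 𝕜 g (t, x) (1, 0) := by
  rw [eulerianVelocity_eq hg, hleft]

theorem differentiable_eulerianVelocity (hg : ContDiff 𝕜 2 g) (hginv : Differentiable 𝕜 ginv) :
    Differentiable 𝕜 (eulerianVelocity g ginv t) := by
  rw [funext (eulerianVelocity_eq (hg.differentiable (by norm_num)))]
  exact (((hg.fderiv_right (m := 1) (by norm_num)).differentiable one_ne_zero).comp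
    (differentiable_const t |>.prodMk hginv)).clm_apply (differentiable_const _)

theorem fderiv_eulerianVelocity_apply_comp (hg : ContDiff 𝕜 2 g) (hginv : Differentiable 𝕜 ginv)
    (hleft : ∀ x, ginv (g (t, x)) = x) (x w : V) :
    fderiv 𝕜 (eulerianVelocity g ginv t) (g (t, x)) (fderiv 𝕜 g (t, x) (0, w))
      = fderiv 𝕜 (fderiv 𝕜 g) (t, x) (1, 0) (0, w) := by
  have hgd : Differentiable 𝕜 g := hg.differentiable (by norm_num)
  have hg'd : Differentiable 𝕜 (fderiv 𝕜 g) :=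
    (hg.fderiv_right (m := 1) (by norm_num)).differentiable one_ne_zero
  have hXd := differentiable_eulerianVelocity (t := t) hg hginv
  calc fderiv 𝕜 (eulerianVelocity g ginv t) (g (t, x)) (fderiv 𝕜 g (t, x) (0, w))
      = fderiv 𝕜 (fun x' => eulerianVelocity g ginv t (g (t, x'))) x w := by
        have hgx : DifferentiableAt 𝕜 (fun x' => g (t, x')) x :=
          (hgd _).comp x ((differentiableAt_const t).prodMk differentiableAt_id)
        rw [← fderiv_comp_prodMk_right_apply (hgd _), ← ContinuousLinearMap.comp_apply,
          ← fderiv_comp x (hXd _) hgx]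
        rfl
    _ = fderiv 𝕜 (fun x' => fderiv 𝕜 g (t, x') (1, 0)) x w := by
        simp only [eulerianVelocity_apply_comp hgd hleft]
    _ = fderiv 𝕜 (fderiv 𝕜 g) (t, x) (0, w) (1, 0) := by
        rw [fderiv_comp_prodMk_right_apply ((hg'd _).clm_apply (differentiableAt_const _)),
          fderiv_clm_apply (hg'd _) (differentiableAt_const _)]
        simp
    _ = fderiv 𝕜 (fderiv 𝕜 g) (t, x) (1, 0) (0, w) :=
        hg.contDiffAt.isSymmSndFDerivAt (by simp) _ _

end EulerianVelocity

theorem derivative_of_pullback_of_time_dependent_k_form_general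
    {V : Type*} [NormedAddCommGroup V] [NormedSpace ℝ V]
    (k : ℕ)
    (g : ℝ × V → V) (hg : ContDiff ℝ 2 g)
    (ginv : ℝ → V → V)
    (hginv_left : ∀ (t : ℝ) (x : V), ginv t (g (t, x)) = x)
    (hginv_smooth : ∀ t : ℝ, ContDiff ℝ 1 (ginv t))
    (X : ℝ → V → V)
    (hX : ∀ (t : ℝ) (y : V), X t y = deriv (fun s => g (s, ginv t y)) t)
    (ω : ℝ × V → ContinuousMultilinearMap ℝ (fun _ : Fin k => V) ℝ)
    (hω : ContDiff ℝ 1 ω) :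
    ∀ (t : ℝ) (x : V) (v : Fin k → V),
      deriv (fun τ => ω (τ, g (τ, x))
          (fun i => fderiv ℝ (fun x' => g (τ, x')) x (v i))) t
        = (deriv (fun s => ω (s, g (t, x))) t)
            (fun i => fderiv ℝ (fun x' => g (t, x')) x (v i))
          + (fderiv ℝ (fun y => ω (t, y)) (g (t, x)) (X t (g (t, x))))
              (fun i => fderiv ℝ (fun x' => g (t, x')) x (v i))
          + ∑ i : Fin k,
              ω (t, g (t, x))
                (Function.update (fun j => fderiv ℝ (fun x' => g (t, x')) x (v j)) i
                  (fderiv ℝ (X t) (g (t, x))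
                    (fderiv ℝ (fun x' => g (t, x')) x (v i)))) := by
  intro t x v
  have hgd : Differentiable ℝ g := hg.differentiable (by norm_num)
  have hωd : Differentiable ℝ ω := hω.differentiable one_ne_zero
  have hXt : X t = eulerianVelocity g (ginv t) t := funext (hX t)
  have hωt : deriv (fun s => ω (s, g (t, x))) t = fderiv ℝ ω (t, g (t, x)) (1, 0) :=
    ((hωd _).hasFDerivAt.hasDerivAt_comp_prodMk (c := fun _ => g (t, x))
      (hasDerivAt_const t _)).deriv
  have hsplit : ∀ a : V, fderiv ℝ ω (t, g (t, x)) (1, a)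
      = fderiv ℝ ω (t, g (t, x)) (1, 0) + fderiv ℝ ω (t, g (t, x)) (0, a) := fun a => by
    rw [← map_add, Prod.mk_add_mk, add_zero, zero_add]
  rw [(hasDerivAt_pullback hgd
    ((hg.fderiv_right (m := 1) (by norm_num)).differentiable one_ne_zero _) (hωd _) v).deriv]
  simp only [fderiv_comp_prodMk_right_apply (hgd _), fderiv_comp_prodMk_right_apply (hωd _), hωt,
    hXt, eulerianVelocity_apply_comp hgd (hginv_left t),
    fderiv_eulerianVelocity_apply_comp hg ((hginv_smooth t).differentiable one_ne_zero)
      (hginv_left t)]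
  rw [hsplit (fderiv ℝ g (t, x) (1, 0)), add_apply]

/-- Proposition A.2: derivative of the pullback of a time-dependent `k`-form,
stated on a finite-dimensional normed space with `k`-forms realized as
continuous multilinear maps that are alternating.
`∂ₜ(gₜ*ωₜ) = gₜ*(∂ₜωₜ + ℒ_{Xₜ}ωₜ)`. -/
theorem derivative_of_pullback_of_time_dependent_k_form
    {V : Type*} [NormedAddCommGroup V] [NormedSpace ℝ V] [FiniteDimensional ℝ V]
    (k : ℕ)
    (g : ℝ × V → V) (hg : ContDiff ℝ 2 g)
    (ginv : ℝ → V → V)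
    (hginv_left : ∀ (t : ℝ) (x : V), ginv t (g (t, x)) = x)
    (hginv_right : ∀ (t : ℝ) (y : V), g (t, ginv t y) = y)
    (hginv_smooth : ∀ t : ℝ, ContDiff ℝ 1 (ginv t))
    (X : ℝ → V → V)
    (hX : ∀ (t : ℝ) (y : V), X t y = deriv (fun s => g (s, ginv t y)) t)
    (ω : ℝ × V → ContinuousMultilinearMap ℝ (fun _ : Fin k => V) ℝ)
    (hω : ContDiff ℝ 1 ω)
    (halt : ∀ (t : ℝ) (x : V) (v : Fin k → V) (i j : Fin k),
      v i = v j → i ≠ j → ω (t, x) v = 0) :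
    ∀ (t : ℝ) (x : V) (v : Fin k → V),
      deriv (fun τ => ω (τ, g (τ, x))
          (fun i => fderiv ℝ (fun x' => g (τ, x')) x (v i))) t
        = (deriv (fun s => ω (s, g (t, x))) t)
            (fun i => fderiv ℝ (fun x' => g (t, x')) x (v i))
          + (fderiv ℝ (fun y => ω (t, y)) (g (t, x)) (X t (g (t, x))))
              (fun i => fderiv ℝ (fun x' => g (t, x')) x (v i))
          + ∑ i : Fin k,
              ω (t, g (t, x))
                (Function.update (fun j => fderiv ℝ (fun x' => g (t, x')) x (v j)) i
                  (fderiv ℝ (X t) (g (t, x))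
                    (fderiv ℝ (fun x' => g (t, x')) x (v i)))) :=
  derivative_of_pullback_of_time_dependent_k_form_general k g hg ginv hginv_left hginv_smooth X hX ω
    hω
end

section
/- (Corollary A.3 of the paper for functions: advection of a pushed-forward function.) Let V be a finite-dimensional real normed vector space, let g : ℝ × V → V be continuously differentiable with each g(t,·) a diffeomorphism and with (t,y) ↦ g(t,·)⁻¹(y) continuously differentiable, and let X(t,y) := (∂ₛ g(s,x))|_{s=t} at x = g(t,·)⁻¹(y) be the Eulerian velocity field. Let f : V → ℝ be continuously differentiable and set fₜ(y) := f(g(t,·)⁻¹(y)) (the pushforward of f by g(t,·)). Then for all t ∈ ℝ and y ∈ V: (∂ₜ fₜ)(y) + D fₜ|_y (X(t,y)) = 0. -/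
/-!
Along a trajectory `s ↦ g (s, x)` of the flow, the pushed-forward function takes the constant
value `f x`, since `g (s, ·)⁻¹ (g (s, x)) = x`. Differentiating this constant at `s = t` by the
chain rule for `(s, y) ↦ f (g (s, ·)⁻¹ y)` gives the time derivative plus the spatial derivative
applied to the trajectory's velocity, which is `X t y` at the point `y = g (t, x)`.
-/

open ContinuousLinearMap

theorem deriv_add_fderiv_apply_eq_deriv_comp_prodMk
    {𝕜 : Type*} [NontriviallyNormedField 𝕜]
    {E : Type*} [NormedAddCommGroup E] [NormedSpace 𝕜 E]
    {F : Type*} [NormedAddCommGroup F] [NormedSpace 𝕜 F]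
    {Φ : 𝕜 × E → F} {γ : 𝕜 → E} {t : 𝕜} {v : E}
    (hΦ : DifferentiableAt 𝕜 Φ (t, γ t)) (hγ : HasDerivAt γ v t) :
    deriv (fun τ => Φ (τ, γ t)) t + fderiv 𝕜 (fun y => Φ (t, y)) (γ t) v
      = deriv (fun s => Φ (s, γ s)) t := by
  have hΦ' := hΦ.hasFDerivAt
  have htime : HasDerivAt (fun τ => Φ (τ, γ t)) (fderiv 𝕜 Φ (t, γ t) (1, 0)) t :=
    hΦ'.comp_hasDerivAt t ((hasDerivAt_id t).prodMk (hasDerivAt_const t (γ t)))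
  have hspace : HasFDerivAt (fun y => Φ (t, y)) ((fderiv 𝕜 Φ (t, γ t)).comp (inr 𝕜 𝕜 E)) (γ t) :=
    hΦ'.comp (γ t) ((hasFDerivAt_const t (γ t)).prodMk (hasFDerivAt_id (γ t)))
  have htotal : HasDerivAt (fun s => Φ (s, γ s)) (fderiv 𝕜 Φ (t, γ t) (1, v)) t :=
    hΦ'.comp_hasDerivAt t ((hasDerivAt_id t).prodMk hγ)
  rw [htime.deriv, hspace.fderiv, htotal.deriv, comp_apply, inr_apply, ← map_add,
    Prod.mk_add_mk, add_zero, zero_add]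

theorem advection_of_pushforward_function_general
    {V : Type*} [NormedAddCommGroup V] [NormedSpace ℝ V]
    (g : ℝ × V → V) (hg : ContDiff ℝ 1 g)
    (ginv : ℝ × V → V) (hginv : ContDiff ℝ 1 ginv)
    (hleft : ∀ (t : ℝ) (x : V), ginv (t, g (t, x)) = x)
    (hright : ∀ (t : ℝ) (y : V), g (t, ginv (t, y)) = y)
    (X : ℝ → V → V)
    (hX : ∀ (t : ℝ) (y : V), X t y = deriv (fun s => g (s, ginv (t, y))) t)
    (f : V → ℝ) (hf : ContDiff ℝ 1 f) :
    ∀ (t : ℝ) (y : V),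
      deriv (fun τ => f (ginv (τ, y))) t
        + fderiv ℝ (fun y' => f (ginv (t, y'))) y (X t y) = 0 := by
  intro t y
  set x := ginv (t, y)
  have htrajectory : DifferentiableAt ℝ (fun s => g (s, x)) t :=
    (hg.differentiable one_ne_zero).differentiableAt.comp t (by fun_prop)
  have hpushforward : DifferentiableAt ℝ (fun p => f (ginv p)) (t, g (t, x)) :=
    (hf.comp hginv).differentiable one_ne_zero _
  have hchain := deriv_add_fderiv_apply_eq_deriv_comp_prodMk hpushforward htrajectory.hasDerivAt
  have hconst : (fun s => f (ginv (s, g (s, x)))) = fun _ => f x := funext fun s => by rw [hleft]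
  rw [hconst, deriv_const, hright] at hchain
  rwa [hX]

/-- Corollary A.3 for functions: the pushed-forward function `fₜ = g_{t*} f`
satisfies the advection equation `(∂ₜ + ℒ_{Xₜ}) fₜ = 0`. -/
theorem advection_of_pushforward_function
    {V : Type*} [NormedAddCommGroup V] [NormedSpace ℝ V] [FiniteDimensional ℝ V]
    (g : ℝ × V → V) (hg : ContDiff ℝ 1 g)
    (ginv : ℝ × V → V) (hginv : ContDiff ℝ 1 ginv)
    (hleft : ∀ (t : ℝ) (x : V), ginv (t, g (t, x)) = x)
    (hright : ∀ (t : ℝ) (y : V), g (t, ginv (t, y)) = y)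
    (X : ℝ → V → V)
    (hX : ∀ (t : ℝ) (y : V), X t y = deriv (fun s => g (s, ginv (t, y))) t)
    (f : V → ℝ) (hf : ContDiff ℝ 1 f) :
    ∀ (t : ℝ) (y : V),
      deriv (fun τ => f (ginv (τ, y))) t
        + fderiv ℝ (fun y' => f (ginv (t, y'))) y (X t y) = 0 :=
  advection_of_pushforward_function_general g hg ginv hginv hleft hright X hX f hf
end

section
/- (Proposition A.4 of the paper: derivative of the vector fields of a two-parameter family of diffeomorphisms.) Let V be a finite-dimensional real normed vector space and let g : ℝ × ℝ × V → V, (t,s,x) ↦ g_{t,s}(x), be twice continuously differentiable with each g_{t,s} : V → V a diffeomorphism. Define the two-parameter Eulerian vector fields X_{t,s}(y) := (∂ₜ g_{t,s})(g_{t,s}⁻¹(y)) and Y_{t,s}(y) := (∂ₛ g_{t,s})(g_{t,s}⁻¹(y)). Then for all t, s and all y ∈ V: ∂ₛ X_{t,s}(y) − ∂ₜ Y_{t,s}(y) = [X_{t,s}, Y_{t,s}](y), where the Lie bracket of vector fields is [X,Y](y) := D Y|_y (X(y)) − D X|_y (Y(y)). -/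
/-!
Write `G (p, x) = g_p x` for a parameter `p` in a normed space `P`, and let
`X_e (p, y) = ∂_p G (p, g_p⁻¹ y) e` be the Eulerian field of the family in the parameter
direction `e`. Differentiating `g_p⁻¹ (g_p x) = x` in `p` gives `D(g⁻¹) (e, X_e) = 0`, so the
full derivative of `(p, y) ↦ X_e (p, y)` in the direction `(f, X_f)` only sees the parameter
part of the second derivative: it equals `D²G (f, 0) (e, 0)`. By the symmetry of `D²G`,
`DX_e (f, X_f) = DX_f (e, X_e)`; that is, the fields `(e, X_e)` on `P × V`, which are the
pushforwards of the constant fields `(e, 0)` under `(p, x) ↦ (p, g_p x)`, commute.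
For `P = ℝ × ℝ`, `e = ∂ₜ`, `f = ∂ₛ`, splitting into parameter and space parts gives the claim.
-/

open ContinuousLinearMap

theorem ContDiffAt.differentiableAt_fderiv {𝕜 E F : Type*} [NontriviallyNormedField 𝕜]
    [NormedAddCommGroup E] [NormedSpace 𝕜 E] [NormedAddCommGroup F] [NormedSpace 𝕜 F]
    {f : E → F} {x : E} (hf : ContDiffAt 𝕜 2 f x) : DifferentiableAt 𝕜 (fderiv 𝕜 f) x :=
  (hf.fderiv_right (m := 1) le_rfl).differentiableAt one_ne_zero

theorem HasFDerivAt.fderiv_prodMk_right_apply {𝕜 P V W : Type*} [NontriviallyNormedField 𝕜]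
    [NormedAddCommGroup P] [NormedSpace 𝕜 P] [NormedAddCommGroup V] [NormedSpace 𝕜 V]
    [NormedAddCommGroup W] [NormedSpace 𝕜 W] {F : P × V → W} {F' : P × V →L[𝕜] W} {p : P}
    {x : V} (hF : HasFDerivAt F F' (p, x)) (v : V) :
    fderiv 𝕜 (fun x => F (p, x)) x v = F' (0, v) := by
  rw [(show HasFDerivAt (fun x => F (p, x)) _ x from
    hF.comp x (hasFDerivAt_prodMk_right p x)).fderiv]
  rfl

section TwoParameters

variable {V W : Type*} [NormedAddCommGroup V] [NormedSpace ℝ V] [NormedAddCommGroup W]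
  [NormedSpace ℝ W] {F : (ℝ × ℝ) × V → W} {F' : (ℝ × ℝ) × V →L[ℝ] W} {t s : ℝ} {x : V}

theorem HasFDerivAt.deriv_fst_fst (hF : HasFDerivAt F F' ((t, s), x)) :
    deriv (fun τ => F ((τ, s), x)) t = F' ((1, 0), 0) :=
  (hF.comp_hasDerivAt t (((hasDerivAt_id t).prodMk (hasDerivAt_const t s)).prodMk
    (hasDerivAt_const t x))).deriv

theorem HasFDerivAt.deriv_fst_snd (hF : HasFDerivAt F F' ((t, s), x)) :
    deriv (fun σ => F ((t, σ), x)) s = F' ((0, 1), 0) :=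
  (hF.comp_hasDerivAt s (((hasDerivAt_const s t).prodMk (hasDerivAt_id s)).prodMk
    (hasDerivAt_const s x))).deriv

end TwoParameters

section EulerianField

variable {𝕜 P V : Type*} [RCLike 𝕜] [NormedAddCommGroup P] [NormedSpace 𝕜 P]
  [NormedAddCommGroup V] [NormedSpace 𝕜 V] {G H : P × V → V} {q : P × V}

variable (𝕜) in
/-- The field `X_e`, with `H (p, y)` standing for `g_p⁻¹ y`. -/
noncomputable def eulerianField (G H : P × V → V) (e : P) (q : P × V) : V :=
  fderiv 𝕜 G (q.1, H q) (e, 0)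

theorem fderiv_inverse_apply_eulerianField (hG : DifferentiableAt 𝕜 G (q.1, H q))
    (hH : DifferentiableAt 𝕜 H q) (hleft : ∀ p x, H (p, G (p, x)) = x)
    (hright : G (q.1, H q) = q.2) (e : P) :
    fderiv 𝕜 H q (e, eulerianField 𝕜 G H e q) = 0 := by
  obtain ⟨p, y⟩ := q
  set u := H (p, y)
  have hH' : HasFDerivAt H (fderiv 𝕜 H (p, y)) (p, G (p, u)) := by
    rw [hright]; exact hH.hasFDerivAt
  have hcomp : HasFDerivAt (fun p' => H (p', G (p', u))) _ p :=
    hH'.comp p ((hasFDerivAt_id (𝕜 := 𝕜) p).prodMk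
      (hG.hasFDerivAt.comp p (hasFDerivAt_prodMk_left p u)))
  have hconst : (fun p' => H (p', G (p', u))) = fun _ => u := funext fun p' => hleft p' u
  rw [hconst] at hcomp
  exact (congrArg (· e) (hcomp.unique (hasFDerivAt_const u p))).trans (zero_apply e)

theorem hasFDerivAt_eulerianField (hG : DifferentiableAt 𝕜 (fderiv 𝕜 G) (q.1, H q))
    (hH : DifferentiableAt 𝕜 H q) (e : P) :
    HasFDerivAt (eulerianField 𝕜 G H e)
      (((fderiv 𝕜 (fderiv 𝕜 G) (q.1, H q)).flip (e, 0)).comp ((fst 𝕜 P V).prod (fderiv 𝕜 H q)))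
      q := by
  have hinner : HasFDerivAt (fun q : P × V => (q.1, H q)) ((fst 𝕜 P V).prod (fderiv 𝕜 H q)) q :=
    hasFDerivAt_fst.prodMk hH.hasFDerivAt
  exact (apply 𝕜 V ((e, 0) : P × V)).hasFDerivAt.comp q (hG.hasFDerivAt.comp q hinner)

theorem differentiableAt_eulerianField (hG : ContDiffAt 𝕜 2 G (q.1, H q))
    (hH : DifferentiableAt 𝕜 H q) (e : P) : DifferentiableAt 𝕜 (eulerianField 𝕜 G H e) q :=
  (hasFDerivAt_eulerianField hG.differentiableAt_fderiv hH e).differentiableAt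

theorem fderiv_eulerianField_apply_eulerianField (hG : ContDiffAt 𝕜 2 G (q.1, H q))
    (hH : DifferentiableAt 𝕜 H q) (hleft : ∀ p x, H (p, G (p, x)) = x)
    (hright : G (q.1, H q) = q.2) (e f : P) :
    fderiv 𝕜 (eulerianField 𝕜 G H e) q (f, eulerianField 𝕜 G H f q)
      = fderiv 𝕜 (fderiv 𝕜 G) (q.1, H q) (f, 0) (e, 0) := by
  rw [(hasFDerivAt_eulerianField hG.differentiableAt_fderiv hH e).fderiv]
  simp [fderiv_inverse_apply_eulerianField (hG.differentiableAt two_ne_zero) hH hleft hright f]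

theorem fderiv_eulerianField_apply_comm (hG : ContDiffAt 𝕜 2 G (q.1, H q))
    (hH : DifferentiableAt 𝕜 H q) (hleft : ∀ p x, H (p, G (p, x)) = x)
    (hright : G (q.1, H q) = q.2) (e f : P) :
    fderiv 𝕜 (eulerianField 𝕜 G H e) q (f, eulerianField 𝕜 G H f q)
      = fderiv 𝕜 (eulerianField 𝕜 G H f) q (e, eulerianField 𝕜 G H e q) := by
  rw [fderiv_eulerianField_apply_eulerianField hG hH hleft hright,
    fderiv_eulerianField_apply_eulerianField hG hH hleft hright]
  exact hG.isSymmSndFDerivAt (by simp) _ _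

end EulerianField

theorem two_parameter_diffeomorphism_vector_fields_general
    {V : Type*} [NormedAddCommGroup V] [NormedSpace ℝ V]
    (g : ℝ → ℝ → V → V)
    (hg : ContDiff ℝ 2 (fun p : ℝ × ℝ × V => g p.1 p.2.1 p.2.2))
    (ginv : ℝ → ℝ → V → V)
    (hginv : ContDiff ℝ 2 (fun p : ℝ × ℝ × V => ginv p.1 p.2.1 p.2.2))
    (hleft : ∀ (t s : ℝ) (x : V), ginv t s (g t s x) = x)
    (hright : ∀ (t s : ℝ) (y : V), g t s (ginv t s y) = y)
    (X Y : ℝ → ℝ → V → V)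
    (hX : ∀ (t s : ℝ) (y : V), X t s y = deriv (fun τ => g τ s (ginv t s y)) t)
    (hY : ∀ (t s : ℝ) (y : V), Y t s y = deriv (fun σ => g t σ (ginv t s y)) s) :
    ∀ (t s : ℝ) (y : V),
      deriv (fun σ => X t σ y) s - deriv (fun τ => Y τ s y) t
        = fderiv ℝ (Y t s) y (X t s y) - fderiv ℝ (X t s) y (Y t s y) := by
  set G : (ℝ × ℝ) × V → V := fun q => g q.1.1 q.1.2 q.2
  set H : (ℝ × ℝ) × V → V := fun q => ginv q.1.1 q.1.2 q.2
  have hG : ContDiff ℝ 2 G := hg.comp contDiff_prodAssoc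
  have hH : Differentiable ℝ H := (hginv.comp contDiff_prodAssoc).differentiable two_ne_zero
  have hGd := fun q => ((hG.differentiable two_ne_zero) q).hasFDerivAt
  have hXG : X = fun t s y => eulerianField ℝ G H (1, 0) ((t, s), y) := by
    ext t s y
    exact (hX t s y).trans (hGd _).deriv_fst_fst
  have hYG : Y = fun t s y => eulerianField ℝ G H (0, 1) ((t, s), y) := by
    ext t s y
    exact (hY t s y).trans (hGd _).deriv_fst_snd
  subst hXG hYG
  intro t s y
  beta_reduce
  have hXd : ∀ e, HasFDerivAt (eulerianField ℝ G H e)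
      (fderiv ℝ (eulerianField ℝ G H e) ((t, s), y)) ((t, s), y) := fun e =>
    (differentiableAt_eulerianField hG.contDiffAt hH.differentiableAt e).hasFDerivAt
  rw [(hXd _).deriv_fst_fst, (hXd _).deriv_fst_snd, (hXd _).fderiv_prodMk_right_apply,
    (hXd _).fderiv_prodMk_right_apply, sub_eq_sub_iff_add_eq_add, ← map_add, add_comm, ← map_add]
  simpa using fderiv_eulerianField_apply_comm (q := ((t, s), y)) hG.contDiffAt hH.differentiableAt
    (fun p x => hleft p.1 p.2 x) (hright t s y) (1, 0) (0, 1)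

/-- Proposition A.4: derivative of the vector fields of a two-parameter family
of diffeomorphisms: `∂ₛX_{t,s} − ∂ₜY_{t,s} = [X_{t,s}, Y_{t,s}]` with
`[X,Y](y) = DY|_y(X(y)) − DX|_y(Y(y))`. -/
theorem two_parameter_diffeomorphism_vector_fields
    {V : Type*} [NormedAddCommGroup V] [NormedSpace ℝ V] [FiniteDimensional ℝ V]
    (g : ℝ → ℝ → V → V)
    (hg : ContDiff ℝ 2 (fun p : ℝ × ℝ × V => g p.1 p.2.1 p.2.2))
    (ginv : ℝ → ℝ → V → V)
    (hginv : ContDiff ℝ 2 (fun p : ℝ × ℝ × V => ginv p.1 p.2.1 p.2.2))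
    (hleft : ∀ (t s : ℝ) (x : V), ginv t s (g t s x) = x)
    (hright : ∀ (t s : ℝ) (y : V), g t s (ginv t s y) = y)
    (X Y : ℝ → ℝ → V → V)
    (hX : ∀ (t s : ℝ) (y : V), X t s y = deriv (fun τ => g τ s (ginv t s y)) t)
    (hY : ∀ (t s : ℝ) (y : V), Y t s y = deriv (fun σ => g t σ (ginv t s y)) s) :
    ∀ (t s : ℝ) (y : V),
      deriv (fun σ => X t σ y) s - deriv (fun τ => Y τ s y) t
        = fderiv ℝ (Y t s) y (X t s y) - fderiv ℝ (X t s) y (Y t s y) :=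
  two_parameter_diffeomorphism_vector_fields_general g hg ginv hginv hleft hright X Y hX hY
end

section
/- (Local conservation of energy density for the Vlasov–Maxwell system.) Assume F, E, B satisfy the Vlasov equation ∂_t F + ∇ₓ·(vF) + ∇ᵥ·((e/m)(E+v×B)F) = 0 together with Maxwell's equations ε₀ ∂_t E + j = μ₀⁻¹ ∇×B and ∂_t B + ∇×E = 0. Then for every t, x: ∂_t ( ∫_{ℝ³} ½ m ‖v‖² F dv + ½ ε₀ ‖E‖² + ½ μ₀⁻¹ ‖B‖² ) + ∇·( ∫_{ℝ³} ½ m ‖v‖² v F dv + μ₀⁻¹ E × B ) = 0. -/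
open MeasureTheory

noncomputable section

/-- `ℝ³` as `Fin 3 → ℝ`. -/
abbrev R3 : Type := Fin 3 → ℝ

/-- Euclidean inner product on `ℝ³`. -/
def dot3 (a b : R3) : ℝ := ∑ i, a i * b i

/-- Cross product on `ℝ³`. -/
def cross3 (a b : R3) : R3 :=
  ![a 1 * b 2 - a 2 * b 1, a 2 * b 0 - a 0 * b 2, a 0 * b 1 - a 1 * b 0]

/-- Euclidean norm on `ℝ³`. -/
def norm3 (a : R3) : ℝ := Real.sqrt (dot3 a a)

/-- Partial derivative in the `i`-th coordinate direction. -/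
def pd (i : Fin 3) (f : R3 → ℝ) (x : R3) : ℝ := fderiv ℝ f x (Pi.single i 1)

/-- Curl of a vector field on `ℝ³`. -/
def curl3 (u : R3 → R3) (x : R3) : R3 :=
  ![pd 1 (fun y => u y 2) x - pd 2 (fun y => u y 1) x,
    pd 2 (fun y => u y 0) x - pd 0 (fun y => u y 2) x,
    pd 0 (fun y => u y 1) x - pd 1 (fun y => u y 0) x]


/-!
Multiplying the Vlasov equation by `½ m ‖v‖²` and integrating in `v` gives the kinetic energy
balance `∂ₜ ∫ ½ m ‖v‖² F dv + ∇·∫ ½ m ‖v‖² v F dv = E·j`. Differentiation under the integral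
sign is legitimate because `F` is `C¹` with velocity support in a fixed compact set, and an
integration by parts in `v` turns the force term into `∫ m v·(e/m)(E + v×B) F dv = E·j`: the
magnetic force does no work. On the field side, Ampère's and Faraday's laws together with
`∇·(E×B) = B·∇×E − E·∇×B` give Poynting's balance
`∂ₜ (½ ε₀ ‖E‖² + ½ μ₀⁻¹ ‖B‖²) + ∇·(μ₀⁻¹ E×B) = −E·j`, and the two balances add up to zero.
-/

section ParametricIntegral

variable {H V E : Type*} [NormedAddCommGroup H] [NormedSpace ℝ H] [NormedAddCommGroup E]
  [NormedSpace ℝ E] {Φ : H → V → E} {K : Set V}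

lemma fderiv_apply_left_eq_zero_of_notMem (hΦK : ∀ p, ∀ v ∉ K, Φ p v = 0) {v : V}
    (hv : v ∉ K) (p : H) : fderiv ℝ (fun p => Φ p v) p = 0 := by
  simp only [hΦK _ v hv, fderiv_const_apply]

variable [NormedAddCommGroup V] [NormedSpace ℝ V]

lemma hasFDerivAt_apply_left (hΦ : Differentiable ℝ (Function.uncurry Φ)) (p : H) (v : V) :
    HasFDerivAt (fun p => Φ p v)
      ((fderiv ℝ (Function.uncurry Φ) (p, v)).comp (ContinuousLinearMap.inl ℝ H V)) p := by
  have h := (hΦ (p, v)).hasFDerivAt.comp p (hasFDerivAt_prodMk_left (𝕜 := ℝ) p v)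
  exact h

lemma differentiableAt_apply_right (hΦ : Differentiable ℝ (Function.uncurry Φ)) (p : H)
    (v : V) : DifferentiableAt ℝ (Φ p) v := by
  have h := (hΦ (p, v)).comp v ((differentiableAt_const (𝕜 := ℝ) p).prodMk differentiableAt_id)
  exact h

variable [MeasurableSpace V] [BorelSpace V] (μ : Measure V) [IsFiniteMeasureOnCompacts μ]

lemma integrable_fderiv_apply_left (hΦ : ContDiff ℝ 1 (Function.uncurry Φ)) (hK : IsCompact K)
    (hΦK : ∀ p, ∀ v ∉ K, Φ p v = 0) (p : H) :
    Integrable (fun v => fderiv ℝ (fun p => Φ p v) p) μ := by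
  have hcont : Continuous fun v => fderiv ℝ (fun p => Φ p v) p := by
    simp only [(hasFDerivAt_apply_left (hΦ.differentiable one_ne_zero) p _).fderiv]
    exact ((hΦ.continuous_fderiv one_ne_zero).comp (Continuous.prodMk_right p)).clm_comp
      continuous_const
  exact hcont.integrable_of_hasCompactSupport
    (HasCompactSupport.intro hK fun v hv => fderiv_apply_left_eq_zero_of_notMem hΦK hv p)

variable [ProperSpace H]

theorem hasFDerivAt_integral_of_contDiff (hΦ : ContDiff ℝ 1 (Function.uncurry Φ))
    (hK : IsCompact K) (hΦK : ∀ p, ∀ v ∉ K, Φ p v = 0) (p₀ : H) :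
    HasFDerivAt (fun p => ∫ v, Φ p v ∂μ) (∫ v, fderiv ℝ (fun p => Φ p v) p₀ ∂μ) p₀ := by
  have hdiff := hΦ.differentiable one_ne_zero
  obtain ⟨C, hC⟩ := ((isCompact_closedBall p₀ 1).prod hK).exists_bound_of_continuousOn
    (hΦ.continuous_fderiv one_ne_zero).continuousOn
  have hbound : ∀ v, ∀ p ∈ Metric.ball p₀ 1,
      ‖fderiv ℝ (fun p => Φ p v) p‖ ≤ K.indicator (fun _ => C) v := by
    intro v p hp
    by_cases hv : v ∈ K
    · have hCv := hC (p, v) ⟨Metric.ball_subset_closedBall hp, hv⟩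
      rw [Set.indicator_of_mem hv, (hasFDerivAt_apply_left hdiff p v).fderiv]
      calc _ ≤ ‖fderiv ℝ (Function.uncurry Φ) (p, v)‖ * ‖ContinuousLinearMap.inl ℝ H V‖ :=
            ContinuousLinearMap.opNorm_comp_le _ _
        _ ≤ C * 1 := by
            gcongr
            · exact (norm_nonneg _).trans hCv
            · exact ContinuousLinearMap.norm_inl_le_one ℝ H V
        _ = C := mul_one C
    · rw [Set.indicator_of_notMem hv, fderiv_apply_left_eq_zero_of_notMem hΦK hv, norm_zero]
  have hint : ∀ p, Integrable (Φ p) μ := fun p =>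
    (hΦ.continuous.comp (Continuous.prodMk_right p)).integrable_of_hasCompactSupport
      (HasCompactSupport.intro hK (hΦK p))
  refine hasFDerivAt_integral_of_dominated_of_fderiv_le (Metric.ball_mem_nhds p₀ one_pos)
    (.of_forall fun p => (hint p).aestronglyMeasurable) (hint p₀)
    (integrable_fderiv_apply_left μ hΦ hK hΦK p₀).aestronglyMeasurable (.of_forall hbound)
    ((integrableOn_const hK.measure_lt_top.ne).integrable_indicator hK.measurableSet) ?_
  exact .of_forall fun v p _ => (hasFDerivAt_apply_left hdiff p v).differentiableAt.hasFDerivAt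

theorem fderiv_integral_apply_of_contDiff (hΦ : ContDiff ℝ 1 (Function.uncurry Φ))
    (hK : IsCompact K) (hΦK : ∀ p, ∀ v ∉ K, Φ p v = 0) (p₀ w : H) :
    fderiv ℝ (fun p => ∫ v, Φ p v ∂μ) p₀ w = ∫ v, fderiv ℝ (fun p => Φ p v) p₀ w ∂μ := by
  rw [(hasFDerivAt_integral_of_contDiff μ hΦ hK hΦK p₀).fderiv,
    ContinuousLinearMap.integral_apply (integrable_fderiv_apply_left μ hΦ hK hΦK p₀)]

end ParametricIntegral

lemma Continuous.integrable_mul_of_hasCompactSupport {X : Type*} [TopologicalSpace X]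
    [MeasurableSpace X] [OpensMeasurableSpace X] {μ : Measure X} [IsFiniteMeasureOnCompacts μ]
    {φ h : X → ℝ} (hφ : Continuous φ) (hh : Continuous h) (hhc : HasCompactSupport h) :
    Integrable (fun v => φ v * h v) μ :=
  (hφ.mul hh).integrable_of_hasCompactSupport hhc.mul_left

section PartialDerivatives

lemma pd_const_mul (c : ℝ) (f : R3 → ℝ) (i : Fin 3) (x : R3) :
    pd i (fun y => c * f y) x = c * pd i f x := by
  rw [pd, show (fun y => c * f y) = c • f from rfl, fderiv_const_smul_field]
  rfl

variable {f g : R3 → ℝ} {x : R3}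

lemma pd_add (hf : DifferentiableAt ℝ f x) (hg : DifferentiableAt ℝ g x) (i : Fin 3) :
    pd i (fun y => f y + g y) x = pd i f x + pd i g x := by
  simp only [pd, fderiv_fun_add hf hg, add_apply]

lemma pd_sub (hf : DifferentiableAt ℝ f x) (hg : DifferentiableAt ℝ g x) (i : Fin 3) :
    pd i (fun y => f y - g y) x = pd i f x - pd i g x := by
  simp only [pd, fderiv_fun_sub hf hg, sub_apply]

lemma pd_mul (hf : DifferentiableAt ℝ f x) (hg : DifferentiableAt ℝ g x) (i : Fin 3) :
    pd i (fun y => f y * g y) x = pd i f x * g x + f x * pd i g x := by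
  simp only [pd, fderiv_fun_mul hf hg, add_apply, smul_apply, smul_eq_mul]
  ring

lemma sum_pd_add {f g : Fin 3 → R3 → ℝ} (hf : ∀ i, DifferentiableAt ℝ (f i) x)
    (hg : ∀ i, DifferentiableAt ℝ (g i) x) :
    ∑ i, pd i (fun y => f i y + g i y) x = ∑ i, pd i (f i) x + ∑ i, pd i (g i) x := by
  rw [← Finset.sum_add_distrib]
  exact Finset.sum_congr rfl fun i _ => pd_add (hf i) (hg i) i

lemma pd_coord (i j : Fin 3) (x : R3) :
    pd i (fun y : R3 => y j) x = if j = i then 1 else 0 := by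
  rw [pd, (hasFDerivAt_apply (𝕜 := ℝ) j x).fderiv]
  simp [Pi.single_apply]

lemma pd_dot3_self (i : Fin 3) (x : R3) : pd i (fun y => dot3 y y) x = 2 * x i := by
  have hdiff : ∀ j, DifferentiableAt ℝ (fun y : R3 => y j * y j) x := fun j =>
    (differentiableAt_apply j x).fun_mul (differentiableAt_apply j x)
  have hpd : ∀ j, pd i (fun y : R3 => y j * y j) x = if j = i then 2 * x i else 0 := fun j => by
    rw [pd_mul (differentiableAt_apply j x) (differentiableAt_apply j x), pd_coord]
    split_ifs with hji <;> simp [hji, two_mul]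
  calc pd i (fun y => dot3 y y) x = ∑ j, pd i (fun y : R3 => y j * y j) x := by
        simp only [dot3, pd, fderiv_fun_sum fun j _ => hdiff j, FunLike.coe_sum,
          Finset.sum_apply]
    _ = 2 * x i := by simp [hpd]

lemma pd_half_mul_dot3_self (m : ℝ) (i : Fin 3) (v : R3) :
    pd i (fun w => 1 / 2 * m * dot3 w w) v = m * v i := by
  rw [pd_const_mul, pd_dot3_self]
  ring

lemma continuous_pd (hg : ContDiff ℝ 1 g) (i : Fin 3) : Continuous (pd i g) :=
  (hg.continuous_fderiv one_ne_zero).clm_apply continuous_const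

lemma HasCompactSupport.pd (hg : HasCompactSupport g) (i : Fin 3) :
    HasCompactSupport (pd i g) :=
  hg.fderiv_apply (𝕜 := ℝ) (Pi.single i 1)

theorem integral_mul_pd_eq_neg (hf : ContDiff ℝ 1 f) (hg : ContDiff ℝ 1 g)
    (hgc : HasCompactSupport g) (i : Fin 3) :
    ∫ v, f v * pd i g v = -∫ v, pd i f v * g v :=
  integral_mul_fderiv_eq_neg_fderiv_mul_of_integrable
    ((continuous_pd hf i).integrable_mul_of_hasCompactSupport hg.continuous hgc)
    (hf.continuous.integrable_mul_of_hasCompactSupport (continuous_pd hg i) (hgc.pd i))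
    (hf.continuous.integrable_mul_of_hasCompactSupport hg.continuous hgc)
    (fun v _ => hf.differentiable one_ne_zero v) (fun v _ => hg.differentiable one_ne_zero v)

end PartialDerivatives

section VectorCalculus

lemma norm_le_norm3 (v : R3) : ‖v‖ ≤ norm3 v := by
  refine (pi_norm_le_iff_of_nonneg (Real.sqrt_nonneg _)).2 fun i => ?_
  rw [Real.norm_eq_abs, ← Real.sqrt_sq_eq_abs, sq]
  exact Real.sqrt_le_sqrt (Finset.single_le_sum (f := fun j => v j * v j)
    (fun j _ => mul_self_nonneg _) (Finset.mem_univ i))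

lemma contDiff_half_mul_dot3_self (m : ℝ) : ContDiff ℝ 1 fun v : R3 => 1 / 2 * m * dot3 v v := by
  unfold dot3
  fun_prop

lemma hasDerivAt_dot3_self {u : ℝ → R3} {t : ℝ}
    (hu : ∀ i, DifferentiableAt ℝ (fun τ => u τ i) t) :
    HasDerivAt (fun τ => dot3 (u τ) (u τ))
      (2 * dot3 (u t) fun i => deriv (fun τ => u τ i) t) t := by
  have h : HasDerivAt (fun τ => ∑ i, u τ i * u τ i)
      (∑ i, (deriv (fun τ => u τ i) t * u t i + u t i * deriv (fun τ => u τ i) t)) t :=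
    HasDerivAt.fun_sum fun i _ => (hu i).hasDerivAt.fun_mul (hu i).hasDerivAt
  refine h.congr_deriv ?_
  simp only [dot3, Finset.mul_sum]
  exact Finset.sum_congr rfl fun i _ => by ring

lemma dot3_cross3_self (a b : R3) : dot3 a (cross3 a b) = 0 := by
  simp only [dot3, cross3, Fin.sum_univ_three, Matrix.cons_val_zero, Matrix.cons_val_one,
    Matrix.cons_val_two, Matrix.head_cons, Matrix.tail_cons]
  ring

lemma contDiff_cross3_left (b : R3) (i : Fin 3) : ContDiff ℝ 1 fun w : R3 => cross3 w b i := by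
  fin_cases i <;> simp [cross3] <;> fun_prop

variable {u w : R3 → R3} {x : R3}

lemma DifferentiableAt.cross3 (hu : DifferentiableAt ℝ u x) (hw : DifferentiableAt ℝ w x) :
    DifferentiableAt ℝ (fun y => cross3 (u y) (w y)) x := by
  have hu' : ∀ j, DifferentiableAt ℝ (fun y => u y j) x := differentiableAt_pi.1 hu
  have hw' : ∀ j, DifferentiableAt ℝ (fun y => w y j) x := differentiableAt_pi.1 hw
  refine differentiableAt_pi.2 fun i => ?_
  fin_cases i <;> simp [_root_.cross3] <;> fun_prop

theorem sum_pd_cross3 (hu : DifferentiableAt ℝ u x) (hw : DifferentiableAt ℝ w x) :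
    ∑ i, pd i (fun y => cross3 (u y) (w y) i) x
      = dot3 (w x) (curl3 u x) - dot3 (u x) (curl3 w x) := by
  have hu' : ∀ j, DifferentiableAt ℝ (fun y => u y j) x := differentiableAt_pi.1 hu
  have hw' : ∀ j, DifferentiableAt ℝ (fun y => w y j) x := differentiableAt_pi.1 hw
  have hpd : ∀ i a b c d, pd i (fun y => u y a * w y b - u y c * w y d) x
      = pd i (fun y => u y a) x * w x b + u x a * pd i (fun y => w y b) x
        - (pd i (fun y => u y c) x * w x d + u x c * pd i (fun y => w y d) x) :=
    fun i a b c d => by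
      rw [pd_sub ((hu' a).fun_mul (hw' b)) ((hu' c).fun_mul (hw' d)), pd_mul (hu' a) (hw' b),
        pd_mul (hu' c) (hw' d)]
  simp only [Fin.sum_univ_three, cross3, curl3, dot3, Matrix.cons_val_zero, Matrix.cons_val_one,
    Matrix.cons_val_two, Matrix.head_cons, Matrix.tail_cons, hpd]
  ring

end VectorCalculus

section VelocityMoments

variable {F : ℝ → R3 → R3 → ℝ} {K : Set R3} {ψ : R3 → ℝ}
  (hF : ContDiff ℝ 1 fun p : ℝ × R3 × R3 => F p.1 p.2.1 p.2.2) (hK : IsCompact K)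
  (hFK : ∀ t x, ∀ v ∉ K, F t x v = 0) (hψ : ContDiff ℝ 1 ψ)

include hF hψ in
lemma contDiff_weight_mul_time_slice (x : R3) :
    ContDiff ℝ 1 (Function.uncurry fun τ v => ψ v * F τ x v) :=
  (hψ.comp contDiff_snd).mul (hF.comp (contDiff_fst.prodMk (contDiff_const.prodMk contDiff_snd)))

include hF hψ in
lemma contDiff_weight_mul_space_slice (t : ℝ) :
    ContDiff ℝ 1 (Function.uncurry fun y v => ψ v * F t y v) :=
  (hψ.comp contDiff_snd).mul (hF.comp (contDiff_const.prodMk (contDiff_fst.prodMk contDiff_snd)))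

include hFK in
lemma weight_mul_eq_zero_of_notMem (t : ℝ) (x : R3) : ∀ v ∉ K, ψ v * F t x v = 0 :=
  fun v hv => by rw [hFK t x v hv, mul_zero]

include hF hK hFK hψ

theorem hasDerivAt_moment (t : ℝ) (x : R3) :
    HasDerivAt (fun τ => ∫ v, ψ v * F τ x v) (∫ v, ψ v * deriv (fun τ => F τ x v) t) t := by
  have hΦ := contDiff_weight_mul_time_slice hF hψ x
  have hΦK := fun τ => weight_mul_eq_zero_of_notMem (ψ := ψ) hFK τ x
  have h := (hasFDerivAt_integral_of_contDiff volume hΦ hK hΦK t).hasDerivAt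
  rw [ContinuousLinearMap.integral_apply (integrable_fderiv_apply_left volume hΦ hK hΦK t)] at h
  simpa only [fderiv_apply_one_eq_deriv, deriv_const_mul_field'] using h

theorem integrable_weight_mul_deriv (t : ℝ) (x : R3) :
    Integrable fun v => ψ v * deriv (fun τ => F τ x v) t := by
  have h := (integrable_fderiv_apply_left volume (contDiff_weight_mul_time_slice hF hψ x) hK
    (fun τ => weight_mul_eq_zero_of_notMem hFK τ x) t).apply_continuousLinearMap 1
  simpa only [fderiv_apply_one_eq_deriv, deriv_const_mul_field'] using h

theorem differentiableAt_moment (t : ℝ) (x : R3) :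
    DifferentiableAt ℝ (fun y => ∫ v, ψ v * F t y v) x :=
  (hasFDerivAt_integral_of_contDiff volume (contDiff_weight_mul_space_slice hF hψ t) hK
    (weight_mul_eq_zero_of_notMem hFK t) x).differentiableAt

theorem pd_moment (t : ℝ) (x : R3) (i : Fin 3) :
    pd i (fun y => ∫ v, ψ v * F t y v) x = ∫ v, ψ v * pd i (fun y => F t y v) x := by
  rw [pd, fderiv_integral_apply_of_contDiff volume (contDiff_weight_mul_space_slice hF hψ t) hK
    (weight_mul_eq_zero_of_notMem hFK t)]
  exact integral_congr_ae (.of_forall fun v => pd_const_mul (ψ v) (fun y => F t y v) i x)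

theorem integrable_weight_mul_pd (t : ℝ) (x : R3) (i : Fin 3) :
    Integrable fun v => ψ v * pd i (fun y => F t y v) x := by
  have h := (integrable_fderiv_apply_left volume (contDiff_weight_mul_space_slice hF hψ t) hK
    (weight_mul_eq_zero_of_notMem hFK t) x).apply_continuousLinearMap (Pi.single i 1)
  exact h.congr (.of_forall fun v => pd_const_mul (ψ v) (fun y => F t y v) i x)

end VelocityMoments

lemma sum_velocity_mul_lorentz_force {m : ℝ} (hm : m ≠ 0) (e : ℝ) (E0 B0 v : R3) (f : ℝ) :
    ∑ i, m * v i * (e / m * (E0 i + cross3 v B0 i) * f) = ∑ i, E0 i * (e * (v i * f)) := by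
  have h := dot3_cross3_self v B0
  simp only [dot3, Fin.sum_univ_three] at h ⊢
  field_simp
  linear_combination e * f * h

theorem integral_kinetic_mul_div_lorentz_force {m : ℝ} (hm : m ≠ 0) (e : ℝ) {f : R3 → ℝ}
    (hf : ContDiff ℝ 1 f) (hfc : HasCompactSupport f) (E0 B0 : R3) :
    ∫ v, 1 / 2 * m * dot3 v v * ∑ i, pd i (fun w => e / m * (E0 i + cross3 w B0 i) * f w) v
      = -dot3 E0 fun i => e * ∫ v, v i * f v := by
  set g : Fin 3 → R3 → ℝ := fun i w => e / m * (E0 i + cross3 w B0 i) * f w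
  have hg : ∀ i, ContDiff ℝ 1 (g i) := fun i =>
    (contDiff_const.mul (contDiff_const.add (contDiff_cross3_left B0 i))).mul hf
  have hgc : ∀ i, HasCompactSupport (g i) := fun i => hfc.mul_left
  have hψ := contDiff_half_mul_dot3_self m
  calc ∫ v, 1 / 2 * m * dot3 v v * ∑ i, pd i (g i) v
      = ∑ i, ∫ v, 1 / 2 * m * dot3 v v * pd i (g i) v := by
        simp_rw [Finset.mul_sum]
        exact integral_finsetSum _ fun i _ =>
          hψ.continuous.integrable_mul_of_hasCompactSupport (continuous_pd (hg i) i) ((hgc i).pd i)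
    _ = -∫ v, ∑ i, m * v i * g i v := by
        simp_rw [integral_mul_pd_eq_neg hψ (hg _) (hgc _), pd_half_mul_dot3_self]
        rw [integral_finsetSum _ fun i _ => (by fun_prop : Continuous fun v : R3 => m * v i)
          |>.integrable_mul_of_hasCompactSupport (hg i).continuous (hgc i), Finset.sum_neg_distrib]
    _ = -∫ v, ∑ i, E0 i * (e * (v i * f v)) := by
        simp only [g, sum_velocity_mul_lorentz_force hm]
    _ = -dot3 E0 fun i => e * ∫ v, v i * f v := by
        rw [integral_finsetSum _ fun i _ =>
          ((continuous_apply i).integrable_mul_of_hasCompactSupport hf.continuous hfc).const_mul e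
            |>.const_mul (E0 i)]
        simp only [dot3, integral_const_mul]

theorem kinetic_energy_balance {m e : ℝ} (hm : m ≠ 0) {F : ℝ → R3 → R3 → ℝ}
    (hF : ContDiff ℝ 1 fun p : ℝ × R3 × R3 => F p.1 p.2.1 p.2.2) {K : Set R3} (hK : IsCompact K)
    (hFK : ∀ t x, ∀ v ∉ K, F t x v = 0) (E0 B0 : R3) (t : ℝ) (x : R3)
    (hVlasov : ∀ v, deriv (fun τ => F τ x v) t + ∑ i, pd i (fun y => v i * F t y v) x
      + ∑ i, pd i (fun w => e / m * (E0 i + cross3 w B0 i) * F t x w) v = 0) :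
    (∫ v, 1 / 2 * m * dot3 v v * deriv (fun τ => F τ x v) t)
      + ∑ i, pd i (fun y => ∫ v, 1 / 2 * m * dot3 v v * v i * F t y v) x
      = dot3 E0 fun i => e * ∫ v, v i * F t x v := by
  have hψ := contDiff_half_mul_dot3_self m
  have hψi : ∀ i, ContDiff ℝ 1 fun v : R3 => 1 / 2 * m * dot3 v v * v i := fun i =>
    hψ.mul (contDiff_apply ℝ ℝ i)
  have hflux : ∀ i, pd i (fun y => ∫ v, 1 / 2 * m * dot3 v v * v i * F t y v) x
      = ∫ v, 1 / 2 * m * dot3 v v * v i * pd i (fun y => F t y v) x := fun i =>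
    pd_moment hF hK hFK (hψi i) t x i
  have htransport : ∀ v, 1 / 2 * m * dot3 v v * deriv (fun τ => F τ x v) t
      + ∑ i, 1 / 2 * m * dot3 v v * v i * pd i (fun y => F t y v) x
      = -(1 / 2 * m * dot3 v v
        * ∑ i, pd i (fun w => e / m * (E0 i + cross3 w B0 i) * F t x w) v) := fun v => by
    have h := hVlasov v
    simp only [pd_const_mul] at h
    rw [show ∑ i, 1 / 2 * m * dot3 v v * v i * pd i (fun y => F t y v) x
        = 1 / 2 * m * dot3 v v * ∑ i, v i * pd i (fun y => F t y v) x by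
      simp only [Finset.mul_sum, mul_assoc]]
    linear_combination 1 / 2 * m * dot3 v v * h
  rw [Finset.sum_congr rfl fun i _ => hflux i,
    ← integral_finsetSum _ fun i _ => integrable_weight_mul_pd hF hK hFK (hψi i) t x i,
    ← integral_add (integrable_weight_mul_deriv hF hK hFK hψ t x)
      (integrable_finsetSum _ fun i _ => integrable_weight_mul_pd hF hK hFK (hψi i) t x i),
    integral_congr_ae (.of_forall htransport), integral_neg,
    integral_kinetic_mul_div_lorentz_force hm e (f := F t x)
      (hF.comp (contDiff_const.prodMk (contDiff_const.prodMk contDiff_id)))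
      (HasCompactSupport.intro hK (hFK t x)), neg_neg]

theorem field_energy_balance {ε₀ μ₀ : ℝ} {E B : ℝ → R3 → R3} {t : ℝ} {x : R3} (J : R3)
    (hE : DifferentiableAt ℝ (E t) x) (hB : DifferentiableAt ℝ (B t) x)
    (hAmpere : ∀ i, ε₀ * deriv (fun τ => E τ x i) t + J i = μ₀⁻¹ * curl3 (B t) x i)
    (hFaraday : ∀ i, deriv (fun τ => B τ x i) t + curl3 (E t) x i = 0) :
    ε₀ * dot3 (E t x) (fun i => deriv (fun τ => E τ x i) t)
      + μ₀⁻¹ * dot3 (B t x) (fun i => deriv (fun τ => B τ x i) t)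
      + ∑ i, pd i (fun y => μ₀⁻¹ * cross3 (E t y) (B t y) i) x
      = -dot3 (E t x) J := by
  simp only [pd_const_mul, ← Finset.mul_sum, sum_pd_cross3 hE hB, dot3, Fin.sum_univ_three]
  linear_combination E t x 0 * hAmpere 0 + E t x 1 * hAmpere 1 + E t x 2 * hAmpere 2
    + μ₀⁻¹ * B t x 0 * hFaraday 0 + μ₀⁻¹ * B t x 1 * hFaraday 1 + μ₀⁻¹ * B t x 2 * hFaraday 2

theorem vlasov_maxwell_energy_conservation_general
    (m e ε₀ μ₀ : ℝ) (hm : 0 < m)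
    (F : ℝ → R3 → R3 → ℝ) (E B : ℝ → R3 → R3)
    (hF : ContDiff ℝ 1 (fun p : ℝ × R3 × R3 => F p.1 p.2.1 p.2.2))
    (hE : ContDiff ℝ 1 (fun p : ℝ × R3 => E p.1 p.2))
    (hB : ContDiff ℝ 1 (fun p : ℝ × R3 => B p.1 p.2))
    (R : ℝ)
    (hsupp : ∀ (t : ℝ) (x v : R3), R ≤ norm3 v → F t x v = 0)
    (hVlasov : ∀ (t : ℝ) (x v : R3),
      deriv (fun τ => F τ x v) t
        + (∑ i, pd i (fun y => v i * F t y v) x)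
        + (∑ i, pd i (fun w => e / m * (E t x i + cross3 w (B t x) i) * F t x w) v)
        = 0)
    (hAmpere : ∀ (t : ℝ) (x : R3) (i : Fin 3),
      ε₀ * deriv (fun τ => E τ x i) t + (e * ∫ v : R3, v i * F t x v)
        = μ₀⁻¹ * curl3 (B t) x i)
    (hFaraday : ∀ (t : ℝ) (x : R3) (i : Fin 3),
      deriv (fun τ => B τ x i) t + curl3 (E t) x i = 0) :
    ∀ (t : ℝ) (x : R3),
      deriv (fun τ =>
          (∫ v : R3, 1 / 2 * m * dot3 v v * F τ x v)
            + 1 / 2 * ε₀ * dot3 (E τ x) (E τ x)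
            + 1 / 2 * μ₀⁻¹ * dot3 (B τ x) (B τ x)) t
        + (∑ i, pd i (fun y =>
            (∫ v : R3, 1 / 2 * m * dot3 v v * v i * F t y v)
              + μ₀⁻¹ * cross3 (E t y) (B t y) i) x)
        = 0 := by
  intro t x
  have hK := isCompact_closedBall (0 : R3) R
  have hFK : ∀ t x, ∀ v ∉ Metric.closedBall (0 : R3) R, F t x v = 0 := fun t x v hv =>
    hsupp t x v ((not_le.1 (by simpa using hv)).le.trans (norm_le_norm3 v))
  have hE' := hE.differentiable one_ne_zero
  have hB' := hB.differentiable one_ne_zero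
  have hEt := differentiableAt_pi.1 (hasFDerivAt_apply_left hE' t x).differentiableAt
  have hBt := differentiableAt_pi.1 (hasFDerivAt_apply_left hB' t x).differentiableAt
  have hEx := differentiableAt_apply_right hE' t x
  have hBx := differentiableAt_apply_right hB' t x
  have hψ := contDiff_half_mul_dot3_self m
  rw [(((hasDerivAt_moment hF hK hFK hψ t x).fun_add
      ((hasDerivAt_dot3_self hEt).const_mul (1 / 2 * ε₀))).fun_add
      ((hasDerivAt_dot3_self hBt).const_mul (1 / 2 * μ₀⁻¹))).deriv,
    sum_pd_add (fun i => differentiableAt_moment hF hK hFK (hψ.mul (contDiff_apply ℝ ℝ i)) t x)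
      (fun i => (differentiableAt_pi.1 (hEx.cross3 hBx) i).const_mul μ₀⁻¹)]
  linarith [kinetic_energy_balance hm.ne' hF hK hFK (E t x) (B t x) t x (hVlasov t x),
    field_energy_balance (fun i => e * ∫ v : R3, v i * F t x v) hEx hBx (hAmpere t x)
      (hFaraday t x)]

/-- Local conservation of energy density for the Vlasov–Maxwell system. -/
theorem vlasov_maxwell_energy_conservation
    (m e ε₀ μ₀ : ℝ) (hm : 0 < m) (he : 0 < e) (hε : 0 < ε₀) (hμ : 0 < μ₀)
    (F : ℝ → R3 → R3 → ℝ) (E B : ℝ → R3 → R3)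
    (hF : ContDiff ℝ 1 (fun p : ℝ × R3 × R3 => F p.1 p.2.1 p.2.2))
    (hE : ContDiff ℝ 1 (fun p : ℝ × R3 => E p.1 p.2))
    (hB : ContDiff ℝ 1 (fun p : ℝ × R3 => B p.1 p.2))
    (R : ℝ) (hR : 0 < R)
    (hsupp : ∀ (t : ℝ) (x v : R3), R ≤ norm3 v → F t x v = 0)
    (hVlasov : ∀ (t : ℝ) (x v : R3),
      deriv (fun τ => F τ x v) t
        + (∑ i, pd i (fun y => v i * F t y v) x)
        + (∑ i, pd i (fun w => e / m * (E t x i + cross3 w (B t x) i) * F t x w) v)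
        = 0)
    (hAmpere : ∀ (t : ℝ) (x : R3) (i : Fin 3),
      ε₀ * deriv (fun τ => E τ x i) t + (e * ∫ v : R3, v i * F t x v)
        = μ₀⁻¹ * curl3 (B t) x i)
    (hFaraday : ∀ (t : ℝ) (x : R3) (i : Fin 3),
      deriv (fun τ => B τ x i) t + curl3 (E t) x i = 0) :
    ∀ (t : ℝ) (x : R3),
      deriv (fun τ =>
          (∫ v : R3, 1 / 2 * m * dot3 v v * F τ x v)
            + 1 / 2 * ε₀ * dot3 (E τ x) (E τ x)
            + 1 / 2 * μ₀⁻¹ * dot3 (B τ x) (B τ x)) t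
        + (∑ i, pd i (fun y =>
            (∫ v : R3, 1 / 2 * m * dot3 v v * v i * F t y v)
              + μ₀⁻¹ * cross3 (E t y) (B t y) i) x)
        = 0 :=
  vlasov_maxwell_energy_conservation_general m e ε₀ μ₀ hm F E B hF hE hB R hsupp hVlasov hAmpere
    hFaraday
end
end

section
/- (Inversion of the Euler–Lagrange condition for the drift-kinetic Vlasov–Maxwell velocity field.) Let m > 0 and e ≠ 0 be reals, let G, Eᶠ, B⋆, b ∈ ℝ³ with b · B⋆ ≠ 0, and let κ, λ ∈ ℝ. Then a quadruple (u, w, ν, ϑ̇) ∈ ℝ³ × ℝ × ℝ × ℝ satisfies the system (i) G − e Eᶠ − e (u × B⋆) + m w b = 0, (ii) κ − m (b · u) = 0, (iii) λ − (m/e) ϑ̇ = 0, (iv) (m/e) ν = 0, if and only if u = (κ/m) · B⋆/(b·B⋆) + ((e Eᶠ − G) × b)/(e (b·B⋆)), w = B⋆ · (e Eᶠ − G)/(m (b·B⋆)), ν = 0, and ϑ̇ = (e/m) λ. In particular the solution is unique. -/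
noncomputable section

/-- The third standard basis vector `ẑ = (0,0,1)`. -/
def zhat : R3 := ![0, 0, 1]

/-!
Dotting the force balance `e (u × B) = c b - F` with `B` kills the Lorentz term and
determines `c`; crossing it with `b` and expanding `(u × B) × b = (u·b) B - (B·b) u`
determines `u` once `b·u` is known, which is the parallel equation. The remaining two
equations are scalar.
-/

open Matrix

theorem cross3_eq_crossProduct (a b : R3) : cross3 a b = a ⨯₃ b := rfl

theorem dot3_eq_dotProduct (a b : R3) : dot3 a b = a ⬝ᵥ b := rfl

section CommRing

variable {R : Type*} [CommRing R] {e c : R} {u B b F : Fin 3 → R}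

theorem mul_dotProduct_eq_of_smul_cross_eq (h : e • (u ⨯₃ B) = c • b - F) :
    c * (b ⬝ᵥ B) = B ⬝ᵥ F := by
  have h' := congrArg (B ⬝ᵥ ·) h
  simp only [dotProduct_smul, dot_cross_self, dotProduct_sub, smul_eq_mul] at h'
  rw [dotProduct_comm]
  linear_combination -h'

theorem smul_eq_of_smul_cross_eq (h : e • (u ⨯₃ B) = c • b - F) :
    (e * (b ⬝ᵥ B)) • u = (e * (b ⬝ᵥ u)) • B + F ⨯₃ b := by
  have h' := congrArg (· ⨯₃ b) h
  simp only [map_smul, map_sub, LinearMap.smul_apply, LinearMap.sub_apply, cross_self,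
    smul_zero, zero_sub, cross_cross_eq_smul_sub_smul] at h'
  rw [dotProduct_comm b u, dotProduct_comm b B]
  linear_combination (norm := module) -h'

end CommRing

theorem smul_cross_eq_and_dotProduct_eq_iff {K : Type*} [Field K] {e c k : K}
    {u B b F : Fin 3 → K} (he : e ≠ 0) (hbB : b ⬝ᵥ B ≠ 0) :
    (e • (u ⨯₃ B) = c • b - F ∧ b ⬝ᵥ u = k) ↔
      (u = k • ((b ⬝ᵥ B)⁻¹ • B) + (e * (b ⬝ᵥ B))⁻¹ • (F ⨯₃ b) ∧
        c = B ⬝ᵥ F / (b ⬝ᵥ B)) := by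
  constructor
  · rintro ⟨hbalance, rfl⟩
    constructor
    · apply smul_right_injective _ (mul_ne_zero he hbB)
      dsimp only
      rw [smul_eq_of_smul_cross_eq hbalance]
      match_scalars <;> field_simp
    · rw [eq_div_iff hbB]
      exact mul_dotProduct_eq_of_smul_cross_eq hbalance
  · rintro ⟨rfl, rfl⟩
    constructor
    · simp only [map_add, map_smul, LinearMap.add_apply, LinearMap.smul_apply, cross_self,
        smul_zero, zero_add, cross_cross_eq_smul_sub_smul, smul_sub, smul_smul]
      rw [dotProduct_comm F B]
      match_scalars <;> field_simp
    · simp only [dotProduct_add, dotProduct_smul, dot_cross_self, smul_eq_mul, mul_zero,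
        add_zero]
      field_simp

/-- Inversion of the Euler–Lagrange condition for the drift-kinetic
Vlasov–Maxwell velocity field. -/
theorem drift_kinetic_euler_lagrange_inversion
    (m e : ℝ) (hm : 0 < m) (he : e ≠ 0)
    (G Ef Bst b : R3) (hbB : dot3 b Bst ≠ 0)
    (κ lam : ℝ) (u : R3) (w ν th : ℝ) :
    (G - e • Ef - e • cross3 u Bst + (m * w) • b = 0
        ∧ κ - m * dot3 b u = 0
        ∧ lam - m / e * th = 0
        ∧ m / e * ν = 0)
      ↔ (u = (κ / m) • ((dot3 b Bst)⁻¹ • Bst)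
            + (e * dot3 b Bst)⁻¹ • cross3 (e • Ef - G) b
          ∧ w = dot3 Bst (e • Ef - G) / (m * dot3 b Bst)
          ∧ ν = 0 ∧ th = e / m * lam) := by
  simp only [cross3_eq_crossProduct, dot3_eq_dotProduct] at hbB ⊢
  have hm₀ : m ≠ 0 := hm.ne'
  have hforce : G - e • Ef - e • (u ⨯₃ Bst) + (m * w) • b = 0 ↔
      e • (u ⨯₃ Bst) = (m * w) • b - (e • Ef - G) := by
    have hneg : G - e • Ef - e • (u ⨯₃ Bst) + (m * w) • b =
        -(e • (u ⨯₃ Bst) - ((m * w) • b - (e • Ef - G))) := by module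
    rw [hneg, neg_eq_zero, sub_eq_zero]
  have hparallel : κ - m * (b ⬝ᵥ u) = 0 ↔ b ⬝ᵥ u = κ / m := by
    rw [sub_eq_zero, eq_div_iff hm₀, eq_comm, mul_comm]
  have hw : m * w = Bst ⬝ᵥ (e • Ef - G) / (b ⬝ᵥ Bst) ↔
      w = Bst ⬝ᵥ (e • Ef - G) / (m * (b ⬝ᵥ Bst)) := by
    rw [div_mul_eq_div_div_swap, eq_div_iff hm₀, mul_comm]
  have hgyro : lam - m / e * th = 0 ↔ th = e / m * lam := by
    rw [sub_eq_zero, ← inv_div m e, eq_inv_mul_iff_mul_eq₀ (div_ne_zero hm₀ he), eq_comm]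
  have hmu : m / e * ν = 0 ↔ ν = 0 := by simp [hm₀, he]
  rw [hforce, hparallel, ← and_assoc, smul_cross_eq_and_dotProduct_eq_iff he hbB, hw, hgyro,
    hmu]
  tauto
end
end
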